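/- arXiv:2602.09198 — 3 statements merged into one kernel-verified Lean document; each statement's English description precedes it below -/
import Mathlib

section
/- (Energy inequality on the control volume to the right of a sliver.) Assume in addition that δΔx ≤ Δt/2. Let q be a C¹ function on a neighbourhood of the closure of C⁺, let g be continuous on the boundary of S, and let u be continuous on [0,Δx]. If the tested variational identity ∫₀^{Δx} q(x,Δt)² dx − ∫₀^{Δx} q(x,0)u(x) dx − ∬_{C⁺} q(∂_t q + ∂_x q) dx dt − {q·g}⁺ + ∫₀^{Δt} q(Δx,t)² dt = 0 holds, then ∫₀^{Δx} q(x,Δt)² dx − ∫₀^{Δx} u(x)² dx + ∫₀^{Δt} q(Δx,t)² dt − {g²}⁺ ≤ 0. -/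
open MeasureTheory

/-- The open sliver (rhombus) with vertices `(0,0)`, `(δΔx, Δt/2)`, `(0, Δt)`
and `(−δΔx, Δt/2)` in the `(x,t)`-plane. -/
def sliverSet (Δx Δt δ : ℝ) : Set (ℝ × ℝ) :=
  {p | |p.1| * (Δt / 2) + |p.2 - Δt / 2| * (δ * Δx) < δ * Δx * (Δt / 2)}

/-- Weighted right-face pairing `{w}⁺`: the integral of `w·(n_x + n_t)` over the
two right faces of the sliver with respect to arclength (`n` the outward unit
normal of the sliver). -/
noncomputable def pairPlus (Δx Δt δ : ℝ) (w : ℝ × ℝ → ℝ) : ℝ :=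
  (∫ s in (0:ℝ)..1, w (s * (δ * Δx), s * (Δt / 2)) * (Δt / 2 - δ * Δx)) +
  (∫ s in (0:ℝ)..1, w ((1 - s) * (δ * Δx), (1 + s) * (Δt / 2)) * (Δt / 2 + δ * Δx))

/-- Weighted left-face pairing `{w}⁻`: the integral of `w·(n_x + n_t)` over the
two left faces of the sliver with respect to arclength (`n` the outward unit
normal of the sliver). -/
noncomputable def pairMinus (Δx Δt δ : ℝ) (w : ℝ × ℝ → ℝ) : ℝ :=
  -(∫ s in (0:ℝ)..1, w (-(s * (δ * Δx)), s * (Δt / 2)) * (Δt / 2 + δ * Δx)) -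
  (∫ s in (0:ℝ)..1, w (-((1 - s) * (δ * Δx)), (1 + s) * (Δt / 2)) * (Δt / 2 - δ * Δx))

/-- The control volume to the right of the sliver:
`C⁺ = ((0,Δx)×(0,Δt)) \ cl(S)`. -/
def Cplus (Δx Δt δ : ℝ) : Set (ℝ × ℝ) :=
  (Set.Ioo 0 Δx ×ˢ Set.Ioo 0 Δt) \ closure (sliverSet Δx Δt δ)

/-- The control volume to the left of the sliver:
`C⁻ = ((−Δx,0)×(0,Δt)) \ cl(S)`. -/
def Cminus (Δx Δt δ : ℝ) : Set (ℝ × ℝ) :=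
  (Set.Ioo (-Δx) 0 ×ˢ Set.Ioo 0 Δt) \ closure (sliverSet Δx Δt δ)

/-- Partial derivative in time `∂ₜ f`. -/
noncomputable def dT (f : ℝ × ℝ → ℝ) (p : ℝ × ℝ) : ℝ := fderiv ℝ f p (0, 1)

/-- Partial derivative in space `∂ₓ f`. -/
noncomputable def dX (f : ℝ × ℝ → ℝ) (p : ℝ × ℝ) : ℝ := fderiv ℝ f p (1, 0)

/-!
Since `q (∂ₜq + ∂ₓq) = ½ (∂ₜ + ∂ₓ)(q²)`, the divergence theorem on `C⁺` turns the volume term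
of the variational identity into boundary terms: the top, bottom and right edges of the box, and
the two right faces of the sliver weighted by `n_x + n_t`, which is `{q²}⁺`. The identity then
reads `½ (top + right) = ∫ q(·,0) u − ½ ∫ q(·,0)² + {q g}⁺ − ½ {q²}⁺`, and `2ab ≤ a² + b²` on
the bottom edge and on the faces, whose weights `Δt/2 ∓ δΔx` are nonnegative, gives the claim.

The divergence theorem is Fubini plus the fundamental theorem of calculus on each slice: for `∂ₓ`
the horizontal slices of `C⁺` are intervals starting on a right face, for `∂ₜ` the vertical slices
are one or two intervals, up to the null line `t = Δt/2`.
-/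

open Set Filter Topology

theorem ContinuousOn.intervalIntegrable_comp {E F : Type*} [TopologicalSpace E]
    [NormedAddCommGroup F] {f : E → F} {U : Set E} (hf : ContinuousOn f U) {γ : ℝ → E}
    (hγ : Continuous γ) {a b : ℝ} (hab : a ≤ b) (hγU : MapsTo γ (Icc a b) U) :
    IntervalIntegrable (fun s => f (γ s)) volume a b :=
  (hf.comp hγ.continuousOn hγU).intervalIntegrable_of_Icc hab

section Calculus

variable {E F : Type*} [NormedAddCommGroup E] [NormedSpace ℝ E]
  [NormedAddCommGroup F] [NormedSpace ℝ F] [CompleteSpace F]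

theorem integral_fderiv_apply_along_line {f : E → F} {U : Set E} (hU : IsOpen U)
    (hf : ContDiffOn ℝ 1 f U) (p v : E) {α β : ℝ} (hαβ : α ≤ β)
    (hmem : ∀ t ∈ Icc α β, p + t • v ∈ U) :
    ∫ t in α..β, fderiv ℝ f (p + t • v) v = f (p + β • v) - f (p + α • v) := by
  have hline (t : ℝ) : HasDerivAt (fun τ : ℝ => p + τ • v) v t := by
    simpa using ((hasDerivAt_id t).smul_const v).const_add p
  apply intervalIntegral.integral_eq_sub_of_hasDerivAt
  · intro t ht
    rw [uIcc_of_le hαβ] at ht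
    exact ((hf.differentiableOn one_ne_zero).differentiableAt
      (hU.mem_nhds (hmem t ht))).hasFDerivAt.comp_hasDerivAt t (hline t)
  · exact ((hf.continuousOn_fderiv_of_isOpen hU le_rfl).clm_apply
      continuousOn_const).intervalIntegrable_comp (by fun_prop) hαβ hmem

end Calculus

section RegionBetween

variable {α E : Type*} [MeasurableSpace α] {μ : Measure α} [SigmaFinite μ]
  [NormedAddCommGroup E] [NormedSpace ℝ E] {φ ψ : α → ℝ} {s : Set α}

theorem setIntegral_regionBetween (hφ : Measurable φ) (hψ : Measurable ψ) (hs : MeasurableSet s)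
    {F : α × ℝ → E} (hF : IntegrableOn F (regionBetween φ ψ s) (μ.prod volume)) :
    ∫ p in regionBetween φ ψ s, F p ∂(μ.prod volume)
      = ∫ x in s, (∫ t in Ioo (φ x) (ψ x), F (x, t)) ∂μ := by
  have hR := measurableSet_regionBetween hφ hψ hs
  rw [← integral_indicator hR, integral_prod _ (hF.integrable_indicator hR),
    ← integral_indicator hs]
  congr 1 with x
  by_cases hx : x ∈ s
  · rw [indicator_of_mem hx, ← integral_indicator measurableSet_Ioo]
    congr 1 with t
    simp only [indicator, regionBetween, mem_ofPred_eq, hx, true_and, mem_Ioo]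
  · simp [indicator, regionBetween, hx]

theorem setIntegral_preimage_swap_regionBetween (hφ : Measurable φ) (hψ : Measurable ψ)
    (hs : MeasurableSet s) {F : ℝ × α → E}
    (hF : IntegrableOn F (Prod.swap ⁻¹' regionBetween φ ψ s) (volume.prod μ)) :
    ∫ p in Prod.swap ⁻¹' regionBetween φ ψ s, F p ∂(volume.prod μ)
      = ∫ x in s, (∫ t in Ioo (φ x) (ψ x), F (t, x)) ∂μ := by
  have hswap := Measure.measurePreserving_swap (μ := (volume : Measure ℝ)) (ν := μ)
  have hemb : MeasurableEmbedding (Prod.swap : ℝ × α → α × ℝ) :=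
    MeasurableEquiv.prodComm.measurableEmbedding
  refine (hswap.setIntegral_preimage_emb hemb (fun p => F p.swap) _).trans ?_
  refine setIntegral_regionBetween hφ hψ hs ?_
  rwa [← hswap.integrableOn_comp_preimage hemb]

end RegionBetween

section PartialDerivatives

variable {E : Type*} [NormedAddCommGroup E] [NormedSpace ℝ E] [CompleteSpace E]
  {f : ℝ × ℝ → E} {U : Set (ℝ × ℝ)} {φ ψ : ℝ → ℝ} {a b : ℝ}

theorem setIntegral_fderiv_snd_regionBetween (hU : IsOpen U) (hf : ContDiffOn ℝ 1 f U)
    (hφ : Measurable φ) (hψ : Measurable ψ) (hab : a ≤ b) (hφψ : ∀ x ∈ Ioo a b, φ x ≤ ψ x)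
    (hmem : ∀ x ∈ Ioo a b, ∀ t ∈ Icc (φ x) (ψ x), (x, t) ∈ U)
    (hint : IntegrableOn (fun p => fderiv ℝ f p (0, 1)) (regionBetween φ ψ (Ioo a b))) :
    ∫ p in regionBetween φ ψ (Ioo a b), fderiv ℝ f p (0, 1)
      = ∫ x in a..b, (f (x, ψ x) - f (x, φ x)) := by
  rw [Measure.volume_eq_prod] at hint ⊢
  rw [setIntegral_regionBetween hφ hψ measurableSet_Ioo hint,
    intervalIntegral.integral_of_le hab, integral_Ioc_eq_integral_Ioo]
  refine setIntegral_congr_fun measurableSet_Ioo fun x hx => ?_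
  have hline := integral_fderiv_apply_along_line hU hf ((x, 0) : ℝ × ℝ) (0, 1) (hφψ x hx)
    (fun t ht => by simpa using hmem x hx t ht)
  simp only [Prod.smul_mk, smul_eq_mul, mul_zero, mul_one, Prod.mk_add_mk, add_zero,
    zero_add] at hline
  rw [← integral_Ioc_eq_integral_Ioo, ← intervalIntegral.integral_of_le (hφψ x hx), hline]

theorem setIntegral_fderiv_fst_preimage_swap_regionBetween (hU : IsOpen U)
    (hf : ContDiffOn ℝ 1 f U) (hφ : Measurable φ) (hψ : Measurable ψ) (hab : a ≤ b)
    (hφψ : ∀ t ∈ Ioo a b, φ t ≤ ψ t) (hmem : ∀ t ∈ Ioo a b, ∀ x ∈ Icc (φ t) (ψ t), (x, t) ∈ U)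
    (hint : IntegrableOn (fun p => fderiv ℝ f p (1, 0))
      (Prod.swap ⁻¹' regionBetween φ ψ (Ioo a b))) :
    ∫ p in Prod.swap ⁻¹' regionBetween φ ψ (Ioo a b), fderiv ℝ f p (1, 0)
      = ∫ t in a..b, (f (ψ t, t) - f (φ t, t)) := by
  rw [Measure.volume_eq_prod] at hint ⊢
  rw [setIntegral_preimage_swap_regionBetween hφ hψ measurableSet_Ioo hint,
    intervalIntegral.integral_of_le hab, integral_Ioc_eq_integral_Ioo]
  refine setIntegral_congr_fun measurableSet_Ioo fun t ht => ?_
  have hline := integral_fderiv_apply_along_line hU hf ((0, t) : ℝ × ℝ) (1, 0) (hφψ t ht)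
    (fun x hx => by simpa using hmem t ht x hx)
  simp only [Prod.smul_mk, smul_eq_mul, mul_zero, mul_one, Prod.mk_add_mk, add_zero,
    zero_add] at hline
  rw [← integral_Ioc_eq_integral_Ioo, ← intervalIntegral.integral_of_le (hφψ t ht), hline]

end PartialDerivatives

section Sliver

variable {Δx Δt δ : ℝ}

noncomputable def sliverGauge (Δx Δt δ : ℝ) (p : ℝ × ℝ) : ℝ :=
  |p.1| * (Δt / 2) + |p.2 - Δt / 2| * (δ * Δx)

theorem continuous_sliverGauge (Δx Δt δ : ℝ) : Continuous (sliverGauge Δx Δt δ) := by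
  unfold sliverGauge; fun_prop

theorem sliverGauge_center_add_smul (Δx Δt δ : ℝ) (p : ℝ × ℝ) {θ : ℝ} (hθ : 0 ≤ θ) :
    sliverGauge Δx Δt δ ((0, Δt / 2) + θ • (p - (0, Δt / 2))) = θ * sliverGauge Δx Δt δ p := by
  simp only [sliverGauge, Prod.fst_add, Prod.snd_add, Prod.smul_fst, Prod.smul_snd,
    Prod.fst_sub, Prod.snd_sub, smul_eq_mul, zero_add, sub_zero, add_sub_cancel_left, abs_mul,
    abs_of_nonneg hθ]
  ring

theorem closure_sliverSet (ha : 0 < δ * Δx) (hΔt : 0 < Δt) :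
    closure (sliverSet Δx Δt δ) = {p | sliverGauge Δx Δt δ p ≤ δ * Δx * (Δt / 2)} := by
  refine (closure_minimal (fun p hp => le_of_lt hp)
    (isClosed_le (continuous_sliverGauge Δx Δt δ) continuous_const)).antisymm fun p hp => ?_
  have hpath : Tendsto (fun θ : ℝ => ((0, Δt / 2) : ℝ × ℝ) + θ • (p - (0, Δt / 2)))
      (𝓝[<] 1) (𝓝 p) := by
    have hc : Continuous fun θ : ℝ => ((0, Δt / 2) : ℝ × ℝ) + θ • (p - (0, Δt / 2)) := by
      fun_prop
    simpa using (hc.tendsto 1).mono_left nhdsWithin_le_nhds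
  refine mem_closure_of_tendsto hpath ?_
  filter_upwards [Ioo_mem_nhdsLT zero_lt_one] with θ hθ
  change sliverGauge Δx Δt δ _ < _
  rw [sliverGauge_center_add_smul _ _ _ _ hθ.1.le]
  have hp' : sliverGauge Δx Δt δ p ≤ δ * Δx * (Δt / 2) := hp
  nlinarith [hθ.1, hθ.2, mul_pos ha hΔt]

theorem frontier_sliverSet (ha : 0 < δ * Δx) (hΔt : 0 < Δt) :
    frontier (sliverSet Δx Δt δ) = {p | sliverGauge Δx Δt δ p = δ * Δx * (Δt / 2)} := by
  have hopen : IsOpen (sliverSet Δx Δt δ) :=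
    isOpen_lt (continuous_sliverGauge Δx Δt δ) continuous_const
  rw [hopen.frontier_eq, closure_sliverSet ha hΔt]
  ext p
  change sliverGauge Δx Δt δ p ≤ _ ∧ ¬ sliverGauge Δx Δt δ p < _ ↔ sliverGauge Δx Δt δ p = _
  rw [not_lt, le_antisymm_iff]

theorem Cplus_eq (ha : 0 < δ * Δx) (hΔt : 0 < Δt) :
    Cplus Δx Δt δ
      = Ioo 0 Δx ×ˢ Ioo 0 Δt ∩ {p | δ * Δx * (Δt / 2) < sliverGauge Δx Δt δ p} := by
  rw [Cplus, closure_sliverSet ha hΔt, sdiff_eq, compl_ofPred]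
  simp only [not_le]

-- Along the segment from `(x, t)` to the point `z` of `C⁺` on the midline `t = Δt/2` the gauge
-- is affine, so it stays above the level of the sliver.
theorem mem_closure_Cplus (ha : 0 < δ * Δx) (haΔx : δ * Δx < Δx) (hΔt : 0 < Δt) {x t : ℝ}
    (hx : x ∈ Icc 0 Δx) (ht : t ∈ Icc 0 Δt)
    (hp : δ * Δx * (Δt / 2) ≤ sliverGauge Δx Δt δ (x, t)) : (x, t) ∈ closure (Cplus Δx Δt δ) := by
  obtain ⟨hx₀, hx₁⟩ := hx
  obtain ⟨ht₀, ht₁⟩ := ht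
  set z : ℝ × ℝ := ((δ * Δx + Δx) / 2, Δt / 2)
  have hpath : Tendsto (fun θ : ℝ => (x, t) + θ • (z - (x, t))) (𝓝[>] 0) (𝓝 (x, t)) := by
    have hc : Continuous fun θ : ℝ => (x, t) + θ • (z - (x, t)) := by fun_prop
    simpa using (hc.tendsto 0).mono_left nhdsWithin_le_nhds
  refine mem_closure_of_tendsto hpath ?_
  filter_upwards [Ioo_mem_nhdsGT zero_lt_one] with θ ⟨hθ₀, hθ₁⟩
  rw [sliverGauge, abs_of_nonneg hx₀] at hp
  have hx : 0 < x + θ * ((δ * Δx + Δx) / 2 - x) := by nlinarith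
  simp only [z, Prod.mk_sub_mk, Prod.smul_mk, Prod.mk_add_mk, smul_eq_mul, Cplus_eq ha hΔt]
  refine ⟨⟨⟨hx, by nlinarith⟩, by nlinarith, by nlinarith⟩, ?_⟩
  change _ < sliverGauge Δx Δt δ _
  rw [sliverGauge, abs_of_pos hx,
    show t + θ * (Δt / 2 - t) - Δt / 2 = (1 - θ) * (t - Δt / 2) by ring,
    abs_mul, abs_of_pos (sub_pos.2 hθ₁)]
  nlinarith [mul_le_mul_of_nonneg_left hp (sub_pos.2 hθ₁).le,
    mul_pos hθ₀ (mul_pos (sub_pos.2 haΔx) hΔt)]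

end Sliver

section Slices

variable {Δx Δt δ x t : ℝ}

noncomputable def sliverRightEdge (Δx Δt δ t : ℝ) : ℝ :=
  δ * Δx * (1 - |t - Δt / 2| / (Δt / 2))

-- Up to its point at height `Δt/2`, the vertical line through `0 < x < Δx` meets `C⁺` below this
-- height and above `Δt` minus it; the cap at `Δt/2` handles `x ≥ δΔx`, where it misses the sliver.
noncomputable def lowerFaceHeight (Δx Δt δ x : ℝ) : ℝ :=
  min (Δt / 2 * x / (δ * Δx)) (Δt / 2)

theorem sliverGauge_sub_eq (hΔt : 0 < Δt) :
    sliverGauge Δx Δt δ (x, t) - δ * Δx * (Δt / 2)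
      = (|x| - sliverRightEdge Δx Δt δ t) * (Δt / 2) := by
  simp only [sliverGauge, sliverRightEdge]
  field_simp
  ring

theorem sliverGauge_of_le (hx : 0 ≤ x) (ht : t ≤ Δt / 2) :
    sliverGauge Δx Δt δ (x, t) = x * (Δt / 2) + (Δt / 2 - t) * (δ * Δx) := by
  rw [sliverGauge, abs_of_nonneg hx, abs_of_nonpos (by linarith), neg_sub]

theorem sliverGauge_of_ge (hx : 0 ≤ x) (ht : Δt / 2 ≤ t) :
    sliverGauge Δx Δt δ (x, t) = x * (Δt / 2) + (t - Δt / 2) * (δ * Δx) := by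
  rw [sliverGauge, abs_of_nonneg hx, abs_of_nonneg (by linarith)]

theorem sliverRightEdge_pos (ha : 0 < δ * Δx) (ht : t ∈ Ioo 0 Δt) :
    0 < sliverRightEdge Δx Δt δ t := by
  have hlt : |t - Δt / 2| < Δt / 2 := abs_sub_lt_iff.2 ⟨by linarith [ht.2], by linarith [ht.1]⟩
  have hΔt : 0 < Δt / 2 := by linarith [ht.1, ht.2]
  exact mul_pos ha (sub_pos.2 ((div_lt_one hΔt).2 hlt))

theorem sliverRightEdge_le (ha : 0 ≤ δ * Δx) (hΔt : 0 < Δt) :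
    sliverRightEdge Δx Δt δ t ≤ δ * Δx := by
  have : 0 ≤ |t - Δt / 2| / (Δt / 2) := by positivity
  unfold sliverRightEdge
  nlinarith

theorem Cplus_eq_preimage_swap_regionBetween (ha : 0 < δ * Δx) (hΔt : 0 < Δt) :
    Cplus Δx Δt δ
      = Prod.swap ⁻¹' regionBetween (sliverRightEdge Δx Δt δ) (fun _ => Δx) (Ioo 0 Δt) := by
  ext ⟨x, t⟩
  have hgauge := sliverGauge_sub_eq (Δx := Δx) (δ := δ) (x := x) (t := t) hΔt
  rw [Cplus_eq ha hΔt]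
  simp only [regionBetween, mem_inter_iff, mem_prod, mem_Ioo, mem_ofPred_eq, mem_preimage,
    Prod.swap_prod_mk]
  constructor
  · rintro ⟨⟨⟨hx₀, hx₁⟩, ht⟩, hlt⟩
    rw [abs_of_pos hx₀] at hgauge
    exact ⟨ht, by nlinarith, hx₁⟩
  · rintro ⟨ht, hedge, hx₁⟩
    have hx₀ := (sliverRightEdge_pos ha ht).trans hedge
    rw [abs_of_pos hx₀] at hgauge
    exact ⟨⟨⟨hx₀, hx₁⟩, ht⟩, by nlinarith⟩

@[fun_prop]
theorem continuous_sliverRightEdge (Δx Δt δ : ℝ) : Continuous (sliverRightEdge Δx Δt δ) := by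
  unfold sliverRightEdge; fun_prop

@[fun_prop]
theorem continuous_lowerFaceHeight (Δx Δt δ : ℝ) : Continuous (lowerFaceHeight Δx Δt δ) := by
  unfold lowerFaceHeight; fun_prop

theorem lowerFaceHeight_le (Δx Δt δ x : ℝ) : lowerFaceHeight Δx Δt δ x ≤ Δt / 2 :=
  min_le_right _ _

theorem lt_lowerFaceHeight_iff (ha : 0 < δ * Δx) :
    t < lowerFaceHeight Δx Δt δ x ↔ t * (δ * Δx) < Δt / 2 * x ∧ t < Δt / 2 := by
  rw [lowerFaceHeight, lt_min_iff, lt_div_iff₀ ha]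

theorem le_lowerFaceHeight_iff (ha : 0 < δ * Δx) :
    t ≤ lowerFaceHeight Δx Δt δ x ↔ t * (δ * Δx) ≤ Δt / 2 * x ∧ t ≤ Δt / 2 := by
  rw [lowerFaceHeight, le_min_iff, le_div_iff₀ ha]

theorem lowerFaceHeight_nonneg (ha : 0 < δ * Δx) (hΔt : 0 < Δt) (hx : 0 ≤ x) :
    0 ≤ lowerFaceHeight Δx Δt δ x :=
  (le_lowerFaceHeight_iff ha).2 ⟨by nlinarith, by linarith⟩

theorem volume_setOf_snd_eq (c : ℝ) : volume {p : ℝ × ℝ | p.2 = c} = 0 := by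
  rw [show {p : ℝ × ℝ | p.2 = c} = univ ×ˢ {c} by ext; simp, Measure.volume_eq_prod,
    Measure.prod_prod, Real.volume_singleton, mul_zero]

theorem union_regionBetween_lowerFaceHeight_subset_Cplus (ha : 0 < δ * Δx) (hΔt : 0 < Δt) :
    regionBetween (fun _ => 0) (lowerFaceHeight Δx Δt δ) (Ioo 0 Δx) ∪
      regionBetween (fun x => Δt - lowerFaceHeight Δx Δt δ x) (fun _ => Δt) (Ioo 0 Δx)
        ⊆ Cplus Δx Δt δ := by
  rw [Cplus_eq ha hΔt]
  rintro ⟨x, t⟩ (⟨⟨hx₀, hx₁⟩, ht₀, ht₁⟩ | ⟨⟨hx₀, hx₁⟩, ht₀, ht₁⟩)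
  · rw [lt_lowerFaceHeight_iff ha] at ht₁
    refine ⟨⟨⟨hx₀, hx₁⟩, ht₀, by linarith⟩, ?_⟩
    change _ < sliverGauge Δx Δt δ (x, t)
    rw [sliverGauge_of_le hx₀.le ht₁.2.le]
    linarith
  · have ht₀' : Δt - t < lowerFaceHeight Δx Δt δ x := by linarith
    rw [lt_lowerFaceHeight_iff ha] at ht₀'
    refine ⟨⟨⟨hx₀, hx₁⟩, by linarith, ht₁⟩, ?_⟩
    change _ < sliverGauge Δx Δt δ (x, t)
    rw [sliverGauge_of_ge hx₀.le (by linarith)]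
    linarith

theorem Cplus_ae_eq_union_regionBetween (ha : 0 < δ * Δx) (hΔt : 0 < Δt) :
    Cplus Δx Δt δ =ᵐ[volume]
      (regionBetween (fun _ => 0) (lowerFaceHeight Δx Δt δ) (Ioo 0 Δx) ∪
        regionBetween (fun x => Δt - lowerFaceHeight Δx Δt δ x) (fun _ => Δt) (Ioo 0 Δx) :
          Set (ℝ × ℝ)) := by
  have hnull : Cplus Δx Δt δ \ (regionBetween (fun _ => 0) (lowerFaceHeight Δx Δt δ) (Ioo 0 Δx) ∪
      regionBetween (fun x => Δt - lowerFaceHeight Δx Δt δ x) (fun _ => Δt) (Ioo 0 Δx))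
        ⊆ {p | p.2 = Δt / 2} := by
    rw [Cplus_eq ha hΔt]
    rintro ⟨x, t⟩ ⟨⟨⟨⟨hx₀, hx₁⟩, ht₀, ht₁⟩, hgauge⟩, hnot⟩
    change _ < sliverGauge Δx Δt δ (x, t) at hgauge
    rcases lt_trichotomy t (Δt / 2) with ht | ht | ht
    · refine absurd ?_ hnot
      rw [sliverGauge_of_le hx₀.le ht.le] at hgauge
      exact Or.inl ⟨⟨hx₀, hx₁⟩, ht₀, (lt_lowerFaceHeight_iff ha).2 ⟨by linarith, ht⟩⟩
    · exact ht
    · refine absurd ?_ hnot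
      rw [sliverGauge_of_ge hx₀.le ht.le] at hgauge
      have : Δt - t < lowerFaceHeight Δx Δt δ x :=
        (lt_lowerFaceHeight_iff ha).2 ⟨by linarith, by linarith⟩
      exact Or.inr ⟨⟨hx₀, hx₁⟩, by linarith, ht₁⟩
  refine ae_eq_set.2 ⟨measure_mono_null hnull (volume_setOf_snd_eq _), ?_⟩
  rw [sdiff_eq_empty.2 (union_regionBetween_lowerFaceHeight_subset_Cplus ha hΔt),
    measure_empty]

end Slices

section Closure

variable {Δx Δt δ x t : ℝ}

theorem mem_closure_Cplus_of_le_lowerFaceHeight (ha : 0 < δ * Δx) (haΔx : δ * Δx < Δx)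
    (hΔt : 0 < Δt) (hx : x ∈ Icc 0 Δx) (ht : t ∈ Icc 0 (lowerFaceHeight Δx Δt δ x)) :
    (x, t) ∈ closure (Cplus Δx Δt δ) := by
  have ht' := (le_lowerFaceHeight_iff ha).1 ht.2
  refine mem_closure_Cplus ha haΔx hΔt hx ⟨ht.1, by linarith⟩ ?_
  rw [sliverGauge_of_le hx.1 ht'.2]
  linarith

theorem mem_closure_Cplus_of_sub_lowerFaceHeight_le (ha : 0 < δ * Δx) (haΔx : δ * Δx < Δx)
    (hΔt : 0 < Δt) (hx : x ∈ Icc 0 Δx) (ht : t ∈ Icc (Δt - lowerFaceHeight Δx Δt δ x) Δt) :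
    (x, t) ∈ closure (Cplus Δx Δt δ) := by
  have ht' := (le_lowerFaceHeight_iff ha).1 (show Δt - t ≤ _ by linarith [ht.1])
  refine mem_closure_Cplus ha haΔx hΔt hx ⟨by linarith, ht.2⟩ ?_
  rw [sliverGauge_of_ge hx.1 (by linarith)]
  linarith

theorem mem_closure_Cplus_of_sliverRightEdge_le (ha : 0 < δ * Δx) (haΔx : δ * Δx < Δx)
    (hΔt : 0 < Δt) (ht : t ∈ Icc 0 Δt) (hx : x ∈ Icc (sliverRightEdge Δx Δt δ t) Δx) :
    (x, t) ∈ closure (Cplus Δx Δt δ) := by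
  have hedge : 0 ≤ sliverRightEdge Δx Δt δ t := by
    have : |t - Δt / 2| ≤ Δt / 2 := abs_sub_le_iff.2 ⟨by linarith [ht.2], by linarith [ht.1]⟩
    exact mul_nonneg ha.le (sub_nonneg.2 ((div_le_one (by linarith)).2 this))
  have hx₀ : 0 ≤ x := hedge.trans hx.1
  refine mem_closure_Cplus ha haΔx hΔt ⟨hx₀, hx.2⟩ ht ?_
  have := sliverGauge_sub_eq (Δx := Δx) (δ := δ) (x := x) (t := t) hΔt
  rw [abs_of_nonneg hx₀] at this
  nlinarith [hx.1]

theorem mem_closure_Cplus_of_mem_frontier_sliverSet (ha : 0 < δ * Δx) (haΔx : δ * Δx < Δx)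
    (hΔt : 0 < Δt) {p : ℝ × ℝ} (hp : p ∈ frontier (sliverSet Δx Δt δ)) (hp₁ : 0 ≤ p.1) :
    p ∈ closure (Cplus Δx Δt δ) := by
  obtain ⟨x, t⟩ := p
  have hx₀ : 0 ≤ x := hp₁
  rw [frontier_sliverSet ha hΔt] at hp
  have hgauge : x * (Δt / 2) + |t - Δt / 2| * (δ * Δx) = δ * Δx * (Δt / 2) := by
    rw [← abs_of_nonneg hx₀]; exact hp
  have hx : x ≤ δ * Δx :=
    le_of_mul_le_mul_right (by nlinarith [abs_nonneg (t - Δt / 2)]) (half_pos hΔt)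
  have ht : |t - Δt / 2| ≤ Δt / 2 := le_of_mul_le_mul_right (by nlinarith) ha
  obtain ⟨ht₀, ht₁⟩ := abs_le.1 ht
  exact mem_closure_Cplus ha haΔx hΔt ⟨hx₀, by linarith⟩ ⟨by linarith, by linarith⟩ hp.ge

theorem intervalIntegrable_lowerFaceHeight {f : ℝ × ℝ → ℝ} (ha : 0 < δ * Δx)
    (haΔx : δ * Δx < Δx) (hΔt : 0 < Δt) (hf : ContinuousOn f (closure (Cplus Δx Δt δ)))
    {a b : ℝ} (hab : a ≤ b) (ha₀ : 0 ≤ a) (hbΔx : b ≤ Δx) :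
    IntervalIntegrable (fun x => f (x, lowerFaceHeight Δx Δt δ x)) volume a b :=
  hf.intervalIntegrable_comp (by fun_prop) hab fun _ hx =>
    mem_closure_Cplus_of_le_lowerFaceHeight ha haΔx hΔt ⟨ha₀.trans hx.1, hx.2.trans hbΔx⟩
      ⟨lowerFaceHeight_nonneg ha hΔt (ha₀.trans hx.1), le_rfl⟩

theorem intervalIntegrable_sub_lowerFaceHeight {f : ℝ × ℝ → ℝ} (ha : 0 < δ * Δx)
    (haΔx : δ * Δx < Δx) (hΔt : 0 < Δt) (hf : ContinuousOn f (closure (Cplus Δx Δt δ)))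
    {a b : ℝ} (hab : a ≤ b) (ha₀ : 0 ≤ a) (hbΔx : b ≤ Δx) :
    IntervalIntegrable (fun x => f (x, Δt - lowerFaceHeight Δx Δt δ x)) volume a b :=
  hf.intervalIntegrable_comp (by fun_prop) hab fun _ hx =>
    mem_closure_Cplus_of_sub_lowerFaceHeight_le ha haΔx hΔt ⟨ha₀.trans hx.1, hx.2.trans hbΔx⟩
      ⟨le_rfl, by linarith [lowerFaceHeight_nonneg ha hΔt (ha₀.trans hx.1)]⟩

theorem isCompact_closure_Cplus (Δx Δt δ : ℝ) : IsCompact (closure (Cplus Δx Δt δ)) :=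
  ((isCompact_Icc.prod isCompact_Icc).isBounded.subset fun _ (hp : _ ∈ Cplus Δx Δt δ) =>
    Set.prod_mono Ioo_subset_Icc_self Ioo_subset_Icc_self hp.1).isCompact_closure

theorem lowerRightFace_mem_frontier_sliverSet (ha : 0 < δ * Δx) (hΔt : 0 < Δt) {s : ℝ}
    (hs : s ∈ Icc 0 1) : (s * (δ * Δx), s * (Δt / 2)) ∈ frontier (sliverSet Δx Δt δ) := by
  rw [frontier_sliverSet ha hΔt]
  change sliverGauge Δx Δt δ _ = _
  rw [sliverGauge_of_le (by nlinarith [hs.1]) (by nlinarith [hs.2])]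
  ring

theorem upperRightFace_mem_frontier_sliverSet (ha : 0 < δ * Δx) (hΔt : 0 < Δt) {s : ℝ}
    (hs : s ∈ Icc 0 1) :
    ((1 - s) * (δ * Δx), (1 + s) * (Δt / 2)) ∈ frontier (sliverSet Δx Δt δ) := by
  rw [frontier_sliverSet ha hΔt]
  change sliverGauge Δx Δt δ _ = _
  rw [sliverGauge_of_ge (by nlinarith [hs.2]) (by nlinarith [hs.1])]
  ring

end Closure

section Faces

variable {Δx Δt δ s : ℝ}

theorem lowerFaceHeight_of_le (ha : 0 < δ * Δx) (hΔt : 0 < Δt) {x : ℝ} (hx : δ * Δx ≤ x) :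
    lowerFaceHeight Δx Δt δ x = Δt / 2 :=
  min_eq_right ((le_div_iff₀ ha).2 (by nlinarith))

theorem lowerFaceHeight_mul (ha : 0 < δ * Δx) (hΔt : 0 < Δt) (hs : s ≤ 1) :
    lowerFaceHeight Δx Δt δ (δ * Δx * s) = s * (Δt / 2) := by
  have : Δt / 2 * (δ * Δx * s) / (δ * Δx) = s * (Δt / 2) := by
    rw [mul_div_assoc, mul_div_cancel_left₀ s ha.ne', mul_comm]
  rw [lowerFaceHeight, this, min_eq_left (by nlinarith)]

theorem sliverRightEdge_mul (hΔt : 0 < Δt) (hs : s ∈ Icc 0 1) :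
    sliverRightEdge Δx Δt δ (s * (Δt / 2)) = s * (δ * Δx) := by
  have : |s * (Δt / 2) - Δt / 2| = (1 - s) * (Δt / 2) := by
    rw [abs_of_nonpos (by nlinarith [hs.2])]; ring
  rw [sliverRightEdge, this]
  field_simp
  ring

theorem sliverRightEdge_one_add_mul (hΔt : 0 < Δt) (hs : 0 ≤ s) :
    sliverRightEdge Δx Δt δ ((1 + s) * (Δt / 2)) = (1 - s) * (δ * Δx) := by
  have : |(1 + s) * (Δt / 2) - Δt / 2| = s * (Δt / 2) := by
    rw [abs_of_nonneg (by nlinarith)]; ring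
  rw [sliverRightEdge, this]
  field_simp

variable (f : ℝ × ℝ → ℝ)

theorem integral_lowerFaceHeight (ha : 0 < δ * Δx) (hΔt : 0 < Δt) :
    ∫ x in (0:ℝ)..δ * Δx, f (x, lowerFaceHeight Δx Δt δ x)
      = δ * Δx * ∫ s in (0:ℝ)..1, f (s * (δ * Δx), s * (Δt / 2)) := by
  have h := intervalIntegral.smul_integral_comp_mul_left (a := 0) (b := 1)
    (fun x => f (x, lowerFaceHeight Δx Δt δ x)) (δ * Δx)
  rw [mul_zero, mul_one, smul_eq_mul] at h
  rw [← h]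
  congr 1
  refine intervalIntegral.integral_congr fun s hs => ?_
  rw [uIcc_of_le zero_le_one] at hs
  simp only [lowerFaceHeight_mul ha hΔt hs.2]
  rw [mul_comm (δ * Δx) s]

theorem integral_sub_lowerFaceHeight (ha : 0 < δ * Δx) (hΔt : 0 < Δt) :
    ∫ x in (0:ℝ)..δ * Δx, f (x, Δt - lowerFaceHeight Δx Δt δ x)
      = δ * Δx * ∫ s in (0:ℝ)..1, f ((1 - s) * (δ * Δx), (1 + s) * (Δt / 2)) := by
  have h := intervalIntegral.smul_integral_comp_mul_left (a := 0) (b := 1)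
    (fun x => f (x, Δt - lowerFaceHeight Δx Δt δ x)) (δ * Δx)
  have hflip := intervalIntegral.integral_comp_sub_left (a := 0) (b := 1)
    (fun s => f (s * (δ * Δx), Δt - s * (Δt / 2))) 1
  rw [mul_zero, mul_one, smul_eq_mul] at h
  rw [sub_zero, sub_self] at hflip
  rw [← h]
  congr 1
  have hcoords (s : ℝ) : (1 + s) * (Δt / 2) = Δt - (1 - s) * (Δt / 2) := by ring
  simp only [hcoords, hflip]
  refine intervalIntegral.integral_congr fun s hs => ?_
  rw [uIcc_of_le zero_le_one] at hs
  simp only [lowerFaceHeight_mul ha hΔt hs.2]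
  rw [mul_comm (δ * Δx) s]

theorem integral_sliverRightEdge_lowerHalf (hΔt : 0 < Δt) :
    ∫ t in (0:ℝ)..Δt / 2, f (sliverRightEdge Δx Δt δ t, t)
      = Δt / 2 * ∫ s in (0:ℝ)..1, f (s * (δ * Δx), s * (Δt / 2)) := by
  have h := intervalIntegral.smul_integral_comp_mul_left (a := 0) (b := 1)
    (fun t => f (sliverRightEdge Δx Δt δ t, t)) (Δt / 2)
  rw [mul_zero, mul_one, smul_eq_mul] at h
  rw [← h]
  congr 1
  refine intervalIntegral.integral_congr fun s hs => ?_
  rw [uIcc_of_le zero_le_one] at hs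
  simp only [mul_comm (Δt / 2) s, sliverRightEdge_mul hΔt hs]

theorem integral_sliverRightEdge_upperHalf (hΔt : 0 < Δt) :
    ∫ t in Δt / 2..Δt, f (sliverRightEdge Δx Δt δ t, t)
      = Δt / 2 * ∫ s in (0:ℝ)..1, f ((1 - s) * (δ * Δx), (1 + s) * (Δt / 2)) := by
  have h := intervalIntegral.smul_integral_comp_mul_add (a := 0) (b := 1)
    (fun t => f (sliverRightEdge Δx Δt δ t, t)) (Δt / 2) (Δt / 2)
  rw [mul_zero, zero_add, mul_one, add_halves, smul_eq_mul] at h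
  rw [← h]
  congr 1
  refine intervalIntegral.integral_congr fun s hs => ?_
  rw [uIcc_of_le zero_le_one] at hs
  simp only [show Δt / 2 * s + Δt / 2 = (1 + s) * (Δt / 2) by ring,
    sliverRightEdge_one_add_mul hΔt hs.1]

end Faces

section Divergence

variable {Δx Δt δ : ℝ} {f : ℝ × ℝ → ℝ} {U : Set (ℝ × ℝ)}

theorem integrableOn_Cplus_fderiv_apply (hU : IsOpen U) (hCU : closure (Cplus Δx Δt δ) ⊆ U)
    (hf : ContDiffOn ℝ 1 f U) (v : ℝ × ℝ) :
    IntegrableOn (fun p => fderiv ℝ f p v) (Cplus Δx Δt δ) :=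
  ((((hf.continuousOn_fderiv_of_isOpen hU le_rfl).clm_apply continuousOn_const).mono
    hCU).integrableOn_compact (isCompact_closure_Cplus Δx Δt δ)).mono_set subset_closure

theorem setIntegral_Cplus_fderiv_fst (ha : 0 < δ * Δx) (haΔx : δ * Δx < Δx) (hΔt : 0 < Δt)
    (hU : IsOpen U) (hCU : closure (Cplus Δx Δt δ) ⊆ U) (hf : ContDiffOn ℝ 1 f U) :
    ∫ p in Cplus Δx Δt δ, fderiv ℝ f p (1, 0)
      = (∫ t in (0:ℝ)..Δt, f (Δx, t))
        - Δt / 2 * ((∫ s in (0:ℝ)..1, f (s * (δ * Δx), s * (Δt / 2)))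
            + ∫ s in (0:ℝ)..1, f ((1 - s) * (δ * Δx), (1 + s) * (Δt / 2))) := by
  have hint := integrableOn_Cplus_fderiv_apply hU hCU hf (1, 0)
  have hedgeΔx (t : ℝ) : sliverRightEdge Δx Δt δ t ≤ Δx :=
    (sliverRightEdge_le ha.le hΔt).trans haΔx.le
  have hmem : ∀ t ∈ Icc 0 Δt, ∀ x ∈ Icc (sliverRightEdge Δx Δt δ t) Δx, (x, t) ∈ U :=
    fun t ht x hx => hCU (mem_closure_Cplus_of_sliverRightEdge_le ha haΔx hΔt ht hx)
  have hedge_int {a b : ℝ} (hab : a ≤ b) (ha₀ : 0 ≤ a) (hbΔt : b ≤ Δt) :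
      IntervalIntegrable (fun t => f (sliverRightEdge Δx Δt δ t, t)) volume a b :=
    hf.continuousOn.intervalIntegrable_comp (by fun_prop) hab
      fun t ht => hmem t ⟨ha₀.trans ht.1, ht.2.trans hbΔt⟩ _ ⟨le_rfl, hedgeΔx t⟩
  rw [Cplus_eq_preimage_swap_regionBetween ha hΔt] at hint ⊢
  rw [setIntegral_fderiv_fst_preimage_swap_regionBetween hU hf
      (continuous_sliverRightEdge Δx Δt δ).measurable measurable_const hΔt.le (fun t _ => hedgeΔx t)
      (fun t ht => hmem t (Ioo_subset_Icc_self ht)) hint,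
    intervalIntegral.integral_sub
      (hf.continuousOn.intervalIntegrable_comp (by fun_prop) hΔt.le
        fun t ht => hmem t ht _ ⟨hedgeΔx t, le_rfl⟩)
      (hedge_int hΔt.le le_rfl le_rfl),
    ← intervalIntegral.integral_add_adjacent_intervals
      (hedge_int (half_pos hΔt).le le_rfl (by linarith))
      (hedge_int (by linarith) (half_pos hΔt).le le_rfl),
    integral_sliverRightEdge_lowerHalf f hΔt, integral_sliverRightEdge_upperHalf f hΔt]
  ring

theorem integral_lowerFaceHeight_sub_integral_sub_lowerFaceHeight (ha : 0 < δ * Δx)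
    (haΔx : δ * Δx < Δx) (hΔt : 0 < Δt) (hf : ContinuousOn f (closure (Cplus Δx Δt δ))) :
    (∫ x in (0:ℝ)..Δx, f (x, lowerFaceHeight Δx Δt δ x))
        - ∫ x in (0:ℝ)..Δx, f (x, Δt - lowerFaceHeight Δx Δt δ x)
      = δ * Δx * ((∫ s in (0:ℝ)..1, f (s * (δ * Δx), s * (Δt / 2)))
          - ∫ s in (0:ℝ)..1, f ((1 - s) * (δ * Δx), (1 + s) * (Δt / 2))) := by
  have hcap : ∫ x in δ * Δx..Δx, f (x, lowerFaceHeight Δx Δt δ x)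
      = ∫ x in δ * Δx..Δx, f (x, Δt - lowerFaceHeight Δx Δt δ x) := by
    refine intervalIntegral.integral_congr fun x hx => ?_
    rw [uIcc_of_le haΔx.le] at hx
    simp only [lowerFaceHeight_of_le ha hΔt hx.1, sub_half]
  rw [← intervalIntegral.integral_add_adjacent_intervals
      (intervalIntegrable_lowerFaceHeight ha haΔx hΔt hf ha.le le_rfl haΔx.le)
      (intervalIntegrable_lowerFaceHeight ha haΔx hΔt hf haΔx.le ha.le le_rfl),
    ← intervalIntegral.integral_add_adjacent_intervals
      (intervalIntegrable_sub_lowerFaceHeight ha haΔx hΔt hf ha.le le_rfl haΔx.le)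
      (intervalIntegrable_sub_lowerFaceHeight ha haΔx hΔt hf haΔx.le ha.le le_rfl),
    integral_lowerFaceHeight f ha hΔt, integral_sub_lowerFaceHeight f ha hΔt, hcap]
  ring

theorem setIntegral_Cplus_fderiv_snd_eq_integral_sub (ha : 0 < δ * Δx) (haΔx : δ * Δx < Δx)
    (hΔt : 0 < Δt) (hU : IsOpen U) (hCU : closure (Cplus Δx Δt δ) ⊆ U)
    (hf : ContDiffOn ℝ 1 f U) :
    ∫ p in Cplus Δx Δt δ, fderiv ℝ f p (0, 1)
      = (∫ x in (0:ℝ)..Δx, (f (x, lowerFaceHeight Δx Δt δ x) - f (x, 0)))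
        + ∫ x in (0:ℝ)..Δx, (f (x, Δt) - f (x, Δt - lowerFaceHeight Δx Δt δ x)) := by
  have hae := Cplus_ae_eq_union_regionBetween ha hΔt
  have hint := (integrableOn_Cplus_fderiv_apply hU hCU hf (0, 1)).congr_set_ae hae.symm
  have hΔx : 0 ≤ Δx := by linarith
  have hlow : Measurable (lowerFaceHeight Δx Δt δ) :=
    (continuous_lowerFaceHeight Δx Δt δ).measurable
  have hhigh : Measurable fun x => Δt - lowerFaceHeight Δx Δt δ x := measurable_const.sub hlow
  have hdisj : Disjoint (regionBetween (fun _ => 0) (lowerFaceHeight Δx Δt δ) (Ioo 0 Δx))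
      (regionBetween (fun x => Δt - lowerFaceHeight Δx Δt δ x) (fun _ => Δt) (Ioo 0 Δx)) :=
    disjoint_left.2 fun p hp₁ hp₂ => by
      linarith [hp₁.2.2, hp₂.2.1, lowerFaceHeight_le Δx Δt δ p.1]
  rw [setIntegral_congr_set hae, setIntegral_union hdisj
      (measurableSet_regionBetween hhigh measurable_const measurableSet_Ioo)
      (hint.mono_set subset_union_left) (hint.mono_set subset_union_right),
    setIntegral_fderiv_snd_regionBetween hU hf measurable_const hlow hΔx
      (fun x hx => lowerFaceHeight_nonneg ha hΔt hx.1.le)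
      (fun x hx t ht => hCU (mem_closure_Cplus_of_le_lowerFaceHeight ha haΔx hΔt
        (Ioo_subset_Icc_self hx) ht))
      (hint.mono_set subset_union_left),
    setIntegral_fderiv_snd_regionBetween hU hf hhigh measurable_const hΔx
      (fun x hx => by linarith [lowerFaceHeight_nonneg ha hΔt hx.1.le])
      (fun x hx t ht => hCU (mem_closure_Cplus_of_sub_lowerFaceHeight_le ha haΔx hΔt
        (Ioo_subset_Icc_self hx) ht))
      (hint.mono_set subset_union_right)]

theorem setIntegral_Cplus_fderiv_snd (ha : 0 < δ * Δx) (haΔx : δ * Δx < Δx) (hΔt : 0 < Δt)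
    (hU : IsOpen U) (hCU : closure (Cplus Δx Δt δ) ⊆ U) (hf : ContDiffOn ℝ 1 f U) :
    ∫ p in Cplus Δx Δt δ, fderiv ℝ f p (0, 1)
      = (∫ x in (0:ℝ)..Δx, f (x, Δt)) - (∫ x in (0:ℝ)..Δx, f (x, 0))
        + δ * Δx * ((∫ s in (0:ℝ)..1, f (s * (δ * Δx), s * (Δt / 2)))
            - ∫ s in (0:ℝ)..1, f ((1 - s) * (δ * Δx), (1 + s) * (Δt / 2))) := by
  have hfC := hf.continuousOn.mono hCU
  have hΔx : 0 ≤ Δx := by linarith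
  rw [setIntegral_Cplus_fderiv_snd_eq_integral_sub ha haΔx hΔt hU hCU hf,
    intervalIntegral.integral_sub
      (intervalIntegrable_lowerFaceHeight ha haΔx hΔt hfC hΔx le_rfl le_rfl)
      (hfC.intervalIntegrable_comp (by fun_prop) hΔx fun x hx =>
        mem_closure_Cplus_of_le_lowerFaceHeight ha haΔx hΔt hx
          ⟨le_rfl, lowerFaceHeight_nonneg ha hΔt hx.1⟩),
    intervalIntegral.integral_sub
      (hfC.intervalIntegrable_comp (by fun_prop) hΔx fun x hx =>
        mem_closure_Cplus_of_sub_lowerFaceHeight_le ha haΔx hΔt hx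
          ⟨by linarith [lowerFaceHeight_nonneg ha hΔt hx.1], le_rfl⟩)
      (intervalIntegrable_sub_lowerFaceHeight ha haΔx hΔt hfC hΔx le_rfl le_rfl)]
  linarith [integral_lowerFaceHeight_sub_integral_sub_lowerFaceHeight ha haΔx hΔt hfC]

end Divergence

section Energy

variable {Δx Δt δ : ℝ} {U : Set (ℝ × ℝ)}

theorem setIntegral_Cplus_fderiv_snd_add_fst {f : ℝ × ℝ → ℝ} (ha : 0 < δ * Δx)
    (haΔx : δ * Δx < Δx) (hΔt : 0 < Δt) (hU : IsOpen U) (hCU : closure (Cplus Δx Δt δ) ⊆ U)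
    (hf : ContDiffOn ℝ 1 f U) :
    ∫ p in Cplus Δx Δt δ, (fderiv ℝ f p (0, 1) + fderiv ℝ f p (1, 0))
      = (∫ x in (0:ℝ)..Δx, f (x, Δt)) - (∫ x in (0:ℝ)..Δx, f (x, 0))
        + (∫ t in (0:ℝ)..Δt, f (Δx, t)) - pairPlus Δx Δt δ f := by
  rw [integral_add (integrableOn_Cplus_fderiv_apply hU hCU hf _)
      (integrableOn_Cplus_fderiv_apply hU hCU hf _),
    setIntegral_Cplus_fderiv_snd ha haΔx hΔt hU hCU hf,
    setIntegral_Cplus_fderiv_fst ha haΔx hΔt hU hCU hf, pairPlus,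
    intervalIntegral.integral_mul_const, intervalIntegral.integral_mul_const]
  ring

theorem setIntegral_Cplus_mul_dT_add_dX {q : ℝ × ℝ → ℝ} (ha : 0 < δ * Δx)
    (haΔx : δ * Δx < Δx) (hΔt : 0 < Δt) (hU : IsOpen U) (hCU : closure (Cplus Δx Δt δ) ⊆ U)
    (hq : ContDiffOn ℝ 1 q U) :
    ∫ p in Cplus Δx Δt δ, q p * (dT q p + dX q p)
      = ((∫ x in (0:ℝ)..Δx, q (x, Δt) ^ 2) - (∫ x in (0:ℝ)..Δx, q (x, 0) ^ 2)
        + (∫ t in (0:ℝ)..Δt, q (Δx, t) ^ 2) - pairPlus Δx Δt δ (fun p => q p ^ 2)) / 2 := by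
  rw [← setIntegral_Cplus_fderiv_snd_add_fst ha haΔx hΔt hU hCU (hq.pow 2), ← integral_div]
  refine setIntegral_congr_fun
    ((measurableSet_Ioo.prod measurableSet_Ioo).diff isClosed_closure.measurableSet)
    fun p hp => ?_
  have hd : HasFDerivAt q (fderiv ℝ q p) p :=
    ((hq.differentiableOn one_ne_zero).differentiableAt
      (hU.mem_nhds (hCU (subset_closure hp)))).hasFDerivAt
  rw [(hd.pow 2).fderiv]
  simp only [dT, dX, smul_apply, smul_eq_mul]
  ring

theorem two_mul_integral_mul_le_integral_sq_add_integral_sq {f g : ℝ → ℝ} {a b : ℝ}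
    (hab : a ≤ b) (hf : ContinuousOn f (Icc a b)) (hg : ContinuousOn g (Icc a b)) :
    2 * ∫ x in a..b, f x * g x ≤ (∫ x in a..b, f x ^ 2) + ∫ x in a..b, g x ^ 2 := by
  have hf₂ : ContinuousOn (fun x => f x ^ 2) (Icc a b) := hf.pow 2
  have hg₂ : ContinuousOn (fun x => g x ^ 2) (Icc a b) := hg.pow 2
  rw [← intervalIntegral.integral_const_mul,
    ← intervalIntegral.integral_add (hf₂.intervalIntegrable_of_Icc hab)
      (hg₂.intervalIntegrable_of_Icc hab)]
  refine intervalIntegral.integral_mono_on hab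
    ((continuousOn_const.mul (hf.mul hg)).intervalIntegrable_of_Icc hab)
    ((hf₂.add hg₂).intervalIntegrable_of_Icc hab) fun x _ => ?_
  nlinarith [sq_nonneg (f x - g x)]

theorem two_mul_pairPlus_mul_le (ha : 0 ≤ δ * Δx) (haΔt : δ * Δx ≤ Δt / 2)
    {v w : ℝ × ℝ → ℝ}
    (hv₁ : ContinuousOn (fun s => v (s * (δ * Δx), s * (Δt / 2))) (Icc 0 1))
    (hw₁ : ContinuousOn (fun s => w (s * (δ * Δx), s * (Δt / 2))) (Icc 0 1))
    (hv₂ : ContinuousOn (fun s => v ((1 - s) * (δ * Δx), (1 + s) * (Δt / 2))) (Icc 0 1))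
    (hw₂ : ContinuousOn (fun s => w ((1 - s) * (δ * Δx), (1 + s) * (Δt / 2))) (Icc 0 1)) :
    2 * pairPlus Δx Δt δ (fun p => v p * w p)
      ≤ pairPlus Δx Δt δ (fun p => v p ^ 2) + pairPlus Δx Δt δ (fun p => w p ^ 2) := by
  simp only [pairPlus, intervalIntegral.integral_mul_const]
  have h₁ := two_mul_integral_mul_le_integral_sq_add_integral_sq zero_le_one hv₁ hw₁
  have h₂ := two_mul_integral_mul_le_integral_sq_add_integral_sq zero_le_one hv₂ hw₂
  nlinarith [mul_le_mul_of_nonneg_right h₁ (sub_nonneg.2 haΔt),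
    mul_le_mul_of_nonneg_right h₂ (by linarith : 0 ≤ Δt / 2 + δ * Δx)]

end Energy

/-- Energy inequality on the control volume to the right of a sliver.
Assume `δΔx ≤ Δt/2`.  If `q` is `C¹` on a neighbourhood of the closure of `C⁺`,
`g` is continuous on the boundary of `S`, `u` is continuous on `[0,Δx]`, and the
tested variational identity
`∫₀^{Δx} q(x,Δt)² dx − ∫₀^{Δx} q(x,0)u(x) dx − ∬_{C⁺} q(∂ₜq + ∂ₓq) dx dt
  − {q·g}⁺ + ∫₀^{Δt} q(Δx,t)² dt = 0`
holds, then
`∫₀^{Δx} q(x,Δt)² dx − ∫₀^{Δx} u(x)² dx + ∫₀^{Δt} q(Δx,t)² dt − {g²}⁺ ≤ 0`. -/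
theorem energy_inequality_Cplus (Δx Δt δ : ℝ)
    (hΔx : 0 < Δx) (hΔt : 0 < Δt) (hδ0 : 0 < δ) (hδ : δ ≤ 1 / 2)
    (hδΔ : δ * Δx ≤ Δt / 2)
    (q : ℝ × ℝ → ℝ) (U : Set (ℝ × ℝ)) (hU : IsOpen U)
    (hCU : closure (Cplus Δx Δt δ) ⊆ U) (hq : ContDiffOn ℝ 1 q U)
    (g : ℝ × ℝ → ℝ) (hg : ContinuousOn g (frontier (sliverSet Δx Δt δ)))
    (u : ℝ → ℝ) (hu : ContinuousOn u (Set.Icc 0 Δx))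
    (hvar : (∫ x in (0:ℝ)..Δx, (q (x, Δt)) ^ 2)
        - (∫ x in (0:ℝ)..Δx, q (x, 0) * u x)
        - (∫ p in Cplus Δx Δt δ, q p * (dT q p + dX q p))
        - pairPlus Δx Δt δ (fun p => q p * g p)
        + (∫ t in (0:ℝ)..Δt, (q (Δx, t)) ^ 2) = 0) :
    (∫ x in (0:ℝ)..Δx, (q (x, Δt)) ^ 2) - (∫ x in (0:ℝ)..Δx, (u x) ^ 2)
      + (∫ t in (0:ℝ)..Δt, (q (Δx, t)) ^ 2)
      - pairPlus Δx Δt δ (fun p => (g p) ^ 2) ≤ 0 := by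
  have ha : 0 < δ * Δx := mul_pos hδ0 hΔx
  have haΔx : δ * Δx < Δx := by nlinarith
  have hqC : ContinuousOn q (closure (Cplus Δx Δt δ)) := hq.continuousOn.mono hCU
  have hbottom : MapsTo (fun x => ((x, 0) : ℝ × ℝ)) (Icc 0 Δx) (closure (Cplus Δx Δt δ)) :=
    fun x hx => mem_closure_Cplus ha haΔx hΔt hx ⟨le_rfl, hΔt.le⟩
      (by rw [sliverGauge_of_le hx.1 (by linarith)]; nlinarith [hx.1])
  have hface₁ : MapsTo (fun s : ℝ => (s * (δ * Δx), s * (Δt / 2))) (Icc 0 1)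
      (frontier (sliverSet Δx Δt δ)) :=
    fun s hs => lowerRightFace_mem_frontier_sliverSet ha hΔt hs
  have hface₂ : MapsTo (fun s : ℝ => ((1 - s) * (δ * Δx), (1 + s) * (Δt / 2))) (Icc 0 1)
      (frontier (sliverSet Δx Δt δ)) :=
    fun s hs => upperRightFace_mem_frontier_sliverSet ha hΔt hs
  have hu_le := two_mul_integral_mul_le_integral_sq_add_integral_sq (f := fun x => q (x, 0))
    hΔx.le (hqC.comp (by fun_prop) hbottom) hu
  have hg_le := two_mul_pairPlus_mul_le ha.le hδΔ
    (hqC.comp (by fun_prop) fun s hs => mem_closure_Cplus_of_mem_frontier_sliverSet ha haΔx hΔt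
      (hface₁ hs) (by nlinarith [hs.1]))
    (hg.comp (by fun_prop) hface₁)
    (hqC.comp (by fun_prop) fun s hs => mem_closure_Cplus_of_mem_frontier_sliverSet ha haΔx hΔt
      (hface₂ hs) (by nlinarith [hs.2]))
    (hg.comp (by fun_prop) hface₂)
  rw [setIntegral_Cplus_mul_dT_add_dX ha haΔx hΔt hU hCU hq] at hvar
  linarith
end

section
/- (Energy inequality on a sliver element.) Assume in addition that δΔx ≤ Δt/2. Let g be a C¹ function on a neighbourhood of the closure of the sliver S and let p be continuous on the two left faces of S. If the tested variational identity −∬_S g(∂_t g + ∂_x g) dx dt + {g²}⁺ + {g·p}⁻ = 0 holds, then {g²}⁺ + {p²}⁻ ≤ 0. -/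
open MeasureTheory

/-- The two left faces of the sliver `S`, i.e. the segments joining `(0,0)` to
`(−δΔx, Δt/2)` and `(−δΔx, Δt/2)` to `(0, Δt)`. -/
def leftFaces (Δx Δt δ : ℝ) : Set (ℝ × ℝ) :=
  ((fun s : ℝ => (-(s * (δ * Δx)), s * (Δt / 2))) '' Set.Icc (0:ℝ) 1) ∪
  ((fun s : ℝ => (-((1 - s) * (δ * Δx)), (1 + s) * (Δt / 2))) '' Set.Icc (0:ℝ) 1)

/-!
Testing the divergence theorem on `S` with `g²` gives `2 ∬_S g (∂ₜg + ∂ₓg) = {g²}⁺ + {g²}⁻`, so the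
variational identity says `{g²}⁺ = {g²}⁻ - 2 {g·p}⁻`. Hence `{g²}⁺ + {p²}⁻ = {(g - p)²}⁻`, which is
`≤ 0` because `δΔx ≤ Δt/2` makes the weights `Δt/2 ± δΔx` of the left-face pairing nonnegative.
The divergence theorem on `S` is pulled back from the one on the unit square along the linear map
sending `(1,0)` and `(0,1)` to the edge vectors `(δΔx, Δt/2)` and `(-δΔx, Δt/2)` of the rhombus.
-/

open Set

theorem abs_sub_add_abs_add_sub_one_lt_one_iff {u v : ℝ} :
    |u - v| + |u + v - 1| < 1 ↔ u ∈ Ioo 0 1 ∧ v ∈ Ioo 0 1 := by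
  simp only [mem_Ioo]
  constructor
  · intro h
    have := le_abs_self (u - v); have := neg_abs_le (u - v)
    have := le_abs_self (u + v - 1); have := neg_abs_le (u + v - 1)
    refine ⟨⟨?_, ?_⟩, ?_, ?_⟩ <;> linarith
  · rintro ⟨⟨hu0, hu1⟩, hv0, hv1⟩
    rcases abs_cases (u - v) with ⟨h₁, -⟩ | ⟨h₁, -⟩ <;>
      rcases abs_cases (u + v - 1) with ⟨h₂, -⟩ | ⟨h₂, -⟩ <;> linarith

theorem add_mul_apply_add_sub_mul_apply (D : ℝ × ℝ →L[ℝ] ℝ) (a b : ℝ) :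
    (b + a) * D (a, b) + (a - b) * D (-a, b) = 2 * a * b * (D (1, 0) + D (0, 1)) := by
  have hD : ∀ c d : ℝ, D (c, d) = c * D (1, 0) + d * D (0, 1) := fun c d => by
    rw [← smul_eq_mul c, ← smul_eq_mul d, ← map_smul, ← map_smul, ← map_add]
    simp
  rw [hD a, hD (-a)]
  ring

theorem ContinuousOn.intervalIntegrable_comp_mul_const {X : Type*} [TopologicalSpace X]
    {s : Set X} {w : X → ℝ} (hw : ContinuousOn w s) {γ : ℝ → X} (hγ : Continuous γ)
    (hγs : MapsTo γ (Icc 0 1) s) (c : ℝ) :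
    IntervalIntegrable (fun t => w (γ t) * c) volume 0 1 :=
  ((hw.comp hγ.continuousOn hγs).mul continuousOn_const).intervalIntegrable_of_Icc zero_le_one

theorem dX_add_dT_sq {g : ℝ × ℝ → ℝ} {z : ℝ × ℝ} (hg : DifferentiableAt ℝ g z) :
    dX (fun y => g y ^ 2) z + dT (fun y => g y ^ 2) z = 2 * (g z * (dT g z + dX g z)) := by
  simp only [dX, dT, fderiv_fun_pow 2 hg, Nat.add_one_sub_one, pow_one, nsmul_eq_mul,
    Nat.cast_ofNat, smul_apply, smul_eq_mul]
  ring

noncomputable def sliverMap (Δx Δt δ : ℝ) : ℝ × ℝ →L[ℝ] ℝ × ℝ :=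
  LinearMap.toContinuousLinearMap <|
    Matrix.toLin (Module.Basis.finTwoProd ℝ) (Module.Basis.finTwoProd ℝ)
      !![δ * Δx, -(δ * Δx); Δt / 2, Δt / 2]

section Sliver

variable {Δx Δt δ : ℝ}

@[simp]
theorem sliverMap_apply (u v : ℝ) :
    sliverMap Δx Δt δ (u, v) = (δ * Δx * (u - v), Δt / 2 * (u + v)) := by
  simp only [sliverMap, LinearMap.coe_toContinuousLinearMap', Matrix.toLin_finTwoProd_apply,
    neg_mul, Prod.mk.injEq]
  constructor <;> ring

theorem det_sliverMap : (sliverMap Δx Δt δ).det = 2 * (δ * Δx) * (Δt / 2) := by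
  simp only [sliverMap, LinearMap.det_toContinuousLinearMap, LinearMap.det_toLin,
    Matrix.det_fin_two_of]
  ring

theorem sliverMap_bijective (ha : δ * Δx ≠ 0) (hb : Δt ≠ 0) :
    Function.Bijective (sliverMap Δx Δt δ) := by
  refine ⟨?_, fun z => ⟨((z.1 / (δ * Δx) + z.2 / (Δt / 2)) / 2,
    (z.2 / (Δt / 2) - z.1 / (δ * Δx)) / 2), ?_⟩⟩
  · rintro ⟨u, v⟩ ⟨u', v'⟩ h
    simp only [sliverMap_apply, Prod.mk.injEq, mul_eq_mul_left_iff, ha, hb,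
      div_eq_zero_iff, two_ne_zero, or_false] at h
    ext <;> linarith [h.1, h.2]
  · simp only [sliverMap_apply]
    generalize δ * Δx = a at ha ⊢
    ext <;> field_simp <;> ring

theorem sliverMap_mem_sliverSet_iff (ha : 0 < δ * Δx) (hb : 0 < Δt) {u v : ℝ} :
    sliverMap Δx Δt δ (u, v) ∈ sliverSet Δx Δt δ ↔ |u - v| + |u + v - 1| < 1 := by
  have hb2 : 0 < Δt / 2 := half_pos hb
  have hrw : |δ * Δx * (u - v)| * (Δt / 2) + |Δt / 2 * (u + v) - Δt / 2| * (δ * Δx)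
      = δ * Δx * (Δt / 2) * (|u - v| + |u + v - 1|) := by
    rw [show Δt / 2 * (u + v) - Δt / 2 = Δt / 2 * (u + v - 1) by ring, abs_mul (δ * Δx),
      abs_of_pos ha, abs_mul, abs_of_pos hb2]
    ring
  simp only [sliverSet, sliverMap_apply, mem_ofPred_eq, hrw]
  exact mul_lt_iff_lt_one_right (by positivity)

theorem sliverSet_eq_image (ha : 0 < δ * Δx) (hb : 0 < Δt) :
    sliverSet Δx Δt δ = sliverMap Δx Δt δ '' Ioo 0 1 ×ˢ Ioo 0 1 := by
  ext z
  obtain ⟨⟨u, v⟩, rfl⟩ := (sliverMap_bijective ha.ne' hb.ne').2 z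
  rw [(sliverMap_bijective ha.ne' hb.ne').1.mem_set_image, sliverMap_mem_sliverSet_iff ha hb,
    abs_sub_add_abs_add_sub_one_lt_one_iff, mem_prod]

theorem isOpen_sliverSet : IsOpen (sliverSet Δx Δt δ) :=
  isOpen_lt (by fun_prop) continuous_const

theorem image_sliverMap_Icc_subset (ha : 0 < δ * Δx) (hb : 0 < Δt) :
    sliverMap Δx Δt δ '' Icc 0 1 ⊆ closure (sliverSet Δx Δt δ) := by
  have hIcc : (Icc 0 1 : Set (ℝ × ℝ)) = closure (Ioo 0 1 ×ˢ Ioo 0 1) := by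
    rw [closure_prod_eq, closure_Ioo zero_ne_one, Icc_prod_eq]
    rfl
  rw [sliverSet_eq_image ha hb, hIcc]
  exact image_closure_subset_closure_image (sliverMap Δx Δt δ).continuous

theorem leftFaces_subset_image_sliverMap :
    leftFaces Δx Δt δ ⊆ sliverMap Δx Δt δ '' Icc 0 1 := by
  rintro _ (⟨s, hs, rfl⟩ | ⟨s, hs, rfl⟩)
  · refine ⟨(0, s), ⟨⟨le_rfl, hs.1⟩, ⟨zero_le_one, hs.2⟩⟩, ?_⟩
    simp only [sliverMap_apply]; ext <;> ring
  · refine ⟨(s, 1), ⟨⟨hs.1, zero_le_one⟩, ⟨hs.2, le_rfl⟩⟩, ?_⟩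
    simp only [sliverMap_apply]; ext <;> ring

theorem integral_sliverSet (ha : 0 < δ * Δx) (hb : 0 < Δt) (h : ℝ × ℝ → ℝ) :
    ∫ z in sliverSet Δx Δt δ, h z
      = 2 * (δ * Δx) * (Δt / 2) * ∫ q in Icc 0 1, h (sliverMap Δx Δt δ q) := by
  rw [sliverSet_eq_image ha hb, integral_image_eq_integral_abs_det_fderiv_smul volume
    (measurableSet_Ioo.prod measurableSet_Ioo)
    (fun q _ => (sliverMap Δx Δt δ).hasFDerivAt.hasFDerivWithinAt)
    (sliverMap_bijective ha.ne' hb.ne').1.injOn, det_sliverMap,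
    abs_of_pos (by positivity), Icc_prod_eq, Measure.volume_eq_prod,
    setIntegral_congr_set (Measure.set_prod_ae_eq Ioo_ae_eq_Icc Ioo_ae_eq_Icc)]
  simp only [smul_eq_mul, integral_const_mul]
  rfl

theorem integral_dX_add_dT_sliverSet (ha : 0 < δ * Δx) (hb : 0 < Δt) {F : ℝ × ℝ → ℝ}
    {U : Set (ℝ × ℝ)} (hU : IsOpen U) (hSU : closure (sliverSet Δx Δt δ) ⊆ U)
    (hF : ContDiffOn ℝ 1 F U) :
    ∫ z in sliverSet Δx Δt δ, (dX F z + dT F z) = pairPlus Δx Δt δ F + pairMinus Δx Δt δ F := by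
  set L := sliverMap Δx Δt δ
  have hLU : MapsTo L (Icc 0 1) U := fun q hq =>
    hSU (image_sliverMap_Icc_subset ha hb (mem_image_of_mem L hq))
  have hFL : ContinuousOn (fun q => F (L q)) (Icc 0 1) :=
    hF.continuousOn.comp L.continuous.continuousOn hLU
  have hDFL : ContinuousOn (fun q => fderiv ℝ F (L q)) (Icc 0 1) :=
    (hF.continuousOn_fderiv_of_isOpen hU le_rfl).comp L.continuous.continuousOn hLU
  have hderiv : ∀ c : ℝ, ∀ q ∈ Ioo (0 : ℝ) 1 ×ˢ Ioo (0 : ℝ) 1,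
      HasFDerivAt (fun q => c * F (L q)) (c • (fderiv ℝ F (L q)).comp L) q := by
    intro c q hq
    have hqU : L q ∈ U :=
      hLU (Icc_prod_eq (0 : ℝ × ℝ) 1 ▸ prod_mono Ioo_subset_Icc_self Ioo_subset_Icc_self hq)
    have hFd := (hF.contDiffAt (hU.mem_nhds hqU)).differentiableAt one_ne_zero
    exact (hFd.hasFDerivAt.comp q L.hasFDerivAt).const_mul c
  -- `(1, 1) = ((Δt/2 + δΔx) L(1, 0) + (δΔx - Δt/2) L(0, 1)) / |det L|`
  have hdiv := integral_divergence_prod_Icc_of_hasFDerivAt_of_le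
    (fun q => (Δt / 2 + δ * Δx) * F (L q)) (fun q => (δ * Δx - Δt / 2) * F (L q))
    (fun q => (Δt / 2 + δ * Δx) • (fderiv ℝ F (L q)).comp L)
    (fun q => (δ * Δx - Δt / 2) • (fderiv ℝ F (L q)).comp L) 0 1 zero_le_one
    (continuousOn_const.mul hFL) (continuousOn_const.mul hFL) (hderiv _) (hderiv _)
    (ContinuousOn.integrableOn_compact isCompact_Icc (by fun_prop))
  rw [integral_sliverSet ha hb, ← integral_const_mul]
  calc _ = ∫ q in Icc 0 1, ((Δt / 2 + δ * Δx) • (fderiv ℝ F (L q)).comp L) (1, 0)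
        + ((δ * Δx - Δt / 2) • (fderiv ℝ F (L q)).comp L) (0, 1) := by
        congr 1
        funext q
        simp [L, dX, dT, add_mul_apply_add_sub_mul_apply]
    _ = _ := hdiv
    _ = _ := by
        simp only [pairPlus, pairMinus, L, sliverMap_apply, intervalIntegral.integral_const_mul,
          intervalIntegral.integral_mul_const, Prod.fst_zero, Prod.snd_zero, Prod.fst_one,
          Prod.snd_one]
        ring_nf

theorem pairMinus_add {w₁ w₂ : ℝ × ℝ → ℝ} (h₁ : ContinuousOn w₁ (leftFaces Δx Δt δ))
    (h₂ : ContinuousOn w₂ (leftFaces Δx Δt δ)) :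
    pairMinus Δx Δt δ (fun z => w₁ z + w₂ z) = pairMinus Δx Δt δ w₁ + pairMinus Δx Δt δ w₂ := by
  have hlower : MapsTo (fun s : ℝ => (-(s * (δ * Δx)), s * (Δt / 2))) (Icc 0 1)
      (leftFaces Δx Δt δ) := fun s hs => Or.inl ⟨s, hs, rfl⟩
  have hupper : MapsTo (fun s : ℝ => (-((1 - s) * (δ * Δx)), (1 + s) * (Δt / 2))) (Icc 0 1)
      (leftFaces Δx Δt δ) := fun s hs => Or.inr ⟨s, hs, rfl⟩
  simp only [pairMinus, add_mul (w₁ _)]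
  rw [intervalIntegral.integral_add
      (h₁.intervalIntegrable_comp_mul_const (by fun_prop) hlower _)
      (h₂.intervalIntegrable_comp_mul_const (by fun_prop) hlower _),
    intervalIntegral.integral_add
      (h₁.intervalIntegrable_comp_mul_const (by fun_prop) hupper _)
      (h₂.intervalIntegrable_comp_mul_const (by fun_prop) hupper _)]
  ring

theorem pairMinus_const_mul (c : ℝ) (w : ℝ × ℝ → ℝ) :
    pairMinus Δx Δt δ (fun z => c * w z) = c * pairMinus Δx Δt δ w := by
  simp only [pairMinus, mul_assoc, intervalIntegral.integral_const_mul]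
  ring

theorem pairMinus_nonpos (h : |δ * Δx| ≤ Δt / 2) {w : ℝ × ℝ → ℝ} (hw : ∀ z, 0 ≤ w z) :
    pairMinus Δx Δt δ w ≤ 0 := by
  obtain ⟨h₁, h₂⟩ := abs_le.1 h
  have hlower := intervalIntegral.integral_nonneg (μ := volume) zero_le_one fun s _ =>
    mul_nonneg (hw (-(s * (δ * Δx)), s * (Δt / 2))) (by linarith : 0 ≤ Δt / 2 + δ * Δx)
  have hupper := intervalIntegral.integral_nonneg (μ := volume) zero_le_one fun s _ =>
    mul_nonneg (hw (-((1 - s) * (δ * Δx)), (1 + s) * (Δt / 2))) (by linarith : 0 ≤ Δt / 2 - δ * Δx)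
  simp only [pairMinus]
  linarith

end Sliver

theorem energy_inequality_sliver_general (Δx Δt δ : ℝ)
    (hΔx : 0 < Δx) (hΔt : 0 < Δt) (hδ0 : 0 < δ)
    (hδΔ : δ * Δx ≤ Δt / 2)
    (g : ℝ × ℝ → ℝ) (U : Set (ℝ × ℝ)) (hU : IsOpen U)
    (hSU : closure (sliverSet Δx Δt δ) ⊆ U) (hg : ContDiffOn ℝ 1 g U)
    (p : ℝ × ℝ → ℝ) (hp : ContinuousOn p (leftFaces Δx Δt δ))
    (hvar : -(∫ z in sliverSet Δx Δt δ, g z * (dT g z + dX g z))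
        + pairPlus Δx Δt δ (fun z => (g z) ^ 2)
        + pairMinus Δx Δt δ (fun z => g z * p z) = 0) :
    pairPlus Δx Δt δ (fun z => (g z) ^ 2)
      + pairMinus Δx Δt δ (fun z => (p z) ^ 2) ≤ 0 := by
  have ha : 0 < δ * Δx := mul_pos hδ0 hΔx
  have hdiv := integral_dX_add_dT_sliverSet ha hΔt hU hSU (hg.pow 2)
  have hsq : ∫ z in sliverSet Δx Δt δ, (dX (fun z => g z ^ 2) z + dT (fun z => g z ^ 2) z)
      = 2 * ∫ z in sliverSet Δx Δt δ, g z * (dT g z + dX g z) := by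
    rw [← integral_const_mul]
    exact setIntegral_congr_fun isOpen_sliverSet.measurableSet fun z hz => dX_add_dT_sq <|
      (hg.contDiffAt (hU.mem_nhds (hSU (subset_closure hz)))).differentiableAt one_ne_zero
  have hgF : ContinuousOn g (leftFaces Δx Δt δ) := hg.continuousOn.mono
    (leftFaces_subset_image_sliverMap.trans ((image_sliverMap_Icc_subset ha hΔt).trans hSU))
  have hsplit : pairMinus Δx Δt δ (fun z => (g z - p z) ^ 2)
      = pairMinus Δx Δt δ (fun z => g z ^ 2) + -2 * pairMinus Δx Δt δ (fun z => g z * p z)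
        + pairMinus Δx Δt δ (fun z => p z ^ 2) := by
    rw [show (fun z => (g z - p z) ^ 2) = fun z => (g z ^ 2 + -2 * (g z * p z)) + p z ^ 2 from
      funext fun z => by ring, pairMinus_add, pairMinus_add, pairMinus_const_mul]
    all_goals fun_prop
  have hnonpos := pairMinus_nonpos (w := fun z => (g z - p z) ^ 2)
    ((abs_of_pos ha).trans_le hδΔ) fun z => sq_nonneg _
  linarith

/-- Energy inequality on a sliver element.  Assume `δΔx ≤ Δt/2`.  If `g` is `C¹`
on a neighbourhood of the closure of the sliver `S`, `p` is continuous on the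
two left faces of `S`, and the tested variational identity
`−∬_S g(∂ₜg + ∂ₓg) dx dt + {g²}⁺ + {g·p}⁻ = 0` holds, then
`{g²}⁺ + {p²}⁻ ≤ 0`. -/
theorem energy_inequality_sliver (Δx Δt δ : ℝ)
    (hΔx : 0 < Δx) (hΔt : 0 < Δt) (hδ0 : 0 < δ) (hδ : δ ≤ 1 / 2)
    (hδΔ : δ * Δx ≤ Δt / 2)
    (g : ℝ × ℝ → ℝ) (U : Set (ℝ × ℝ)) (hU : IsOpen U)
    (hSU : closure (sliverSet Δx Δt δ) ⊆ U) (hg : ContDiffOn ℝ 1 g U)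
    (p : ℝ × ℝ → ℝ) (hp : ContinuousOn p (leftFaces Δx Δt δ))
    (hvar : -(∫ z in sliverSet Δx Δt δ, g z * (dT g z + dX g z))
        + pairPlus Δx Δt δ (fun z => (g z) ^ 2)
        + pairMinus Δx Δt δ (fun z => g z * p z) = 0) :
    pairPlus Δx Δt δ (fun z => (g z) ^ 2)
      + pairMinus Δx Δt δ (fun z => (p z) ^ 2) ≤ 0 :=
  energy_inequality_sliver_general Δx Δt δ hΔx hΔt hδ0 hδΔ g U hU hSU hg p hp hvar
end

section
/- (Unconditional L² stability of the implicit ADER-DG method on a classical fixed geometry.) Let N ≥ 0 and M ≥ 1 be integers and Δx, Δt > 0. Suppose that bivariate polynomials q_j of total degree ≤ N, one on each control volume C_j, satisfy, for every bivariate polynomial test function θ of total degree ≤ N and every cell index j: ∫_{Ω_j} θ(x,Δt) q_j(x,Δt) dx − ∬_{C_j} (∂_tθ + ∂_xθ) q_j dx dt + ∫₀^{Δt} θ((j+1)Δx, t) q_j((j+1)Δx, t) dt − ∫₀^{Δt} θ(jΔx, t) q_{j−1}(jΔx, t) dt = ∫_{Ω_j} θ(x,0) u_j(x) dx, where q_{j−1}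 is the solution on the left neighbouring control volume. Then Σ_j ∫_{Ω_j} q_j(x,Δt)² dx ≤ Σ_j ∫_{Ω_j} u_j(x)² dx; i.e., the implicit ADER-DG method for the linear advection equation ∂_t u + ∂_x u = 0 on a fixed uniform periodic grid is L² stable for every time step Δt > 0 (unconditional stability). -/
open MeasureTheory

/-- Evaluation of a bivariate polynomial `P` at the spacetime point `(x, t)`
(variable `0` is space, variable `1` is time); each cell is described in the
reference coordinates `(0,Δx)×(0,Δt)` of its own spacetime control volume. -/
noncomputable def evalP (P : MvPolynomial (Fin 2) ℝ) (x t : ℝ) : ℝ :=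
  MvPolynomial.eval ![x, t] P

/-!
Test the scheme on each control volume with `θ = q_j`, which is admissible since `q_j` has
degree `≤ N`. The volume term is then an exact derivative, `(∂ₜq + ∂ₓq) q = ∂ₜ(q²/2) + ∂ₓ(q²/2)`,
and integrates to half the jumps of `q²` across the four sides of the control volume. What is
left is an energy identity whose two cross terms, `∫ q_j(x,0) u_j(x) dx` and the upwind inflow
`∫ q_j(0,t) q_{j-1}(Δx,t) dt`, are bounded by Young's inequality; this yields
`‖q_j(·,Δt)‖² + ‖q_j(Δx,·)‖² ≤ ‖u_j‖² + ‖q_{j-1}(Δx,·)‖²`.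
Summing over the periodic grid, the interface terms cancel.
-/

open MvPolynomial Set

theorem MvPolynomial.hasDerivAt_eval_update {σ : Type*} [DecidableEq σ]
    (P : MvPolynomial σ ℝ) (v : σ → ℝ) (i : σ) (s : ℝ) :
    HasDerivAt (fun s => eval (Function.update v i s) P)
      (eval (Function.update v i s) (pderiv i P)) s := by
  induction P using MvPolynomial.induction_on with
  | C a => simpa using hasDerivAt_const s a
  | add p q hp hq => simp only [map_add]; exact hp.add hq
  | mul_X p j hp =>
    simp only [map_mul, eval_X, pderiv_mul, map_add]
    rcases eq_or_ne j i with rfl | hji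
    · simp only [Function.update_self, pderiv_X_self, map_one, mul_one]
      exact (hp.mul (hasDerivAt_id' s)).congr_deriv (by ring)
    · simp only [Function.update_of_ne hji, pderiv_X_of_ne hji, map_zero, mul_zero, add_zero]
      exact hp.mul_const (v j)

theorem hasDerivAt_evalP_space (P : MvPolynomial (Fin 2) ℝ) (x t : ℝ) :
    HasDerivAt (fun x => evalP P x t) (evalP (pderiv 0 P) x t) x := by
  have h : ∀ s, Function.update ![x, t] 0 s = ![s, t] := fun s => by
    ext i; fin_cases i <;> simp
  simpa only [evalP, h] using P.hasDerivAt_eval_update ![x, t] 0 x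

theorem hasDerivAt_evalP_time (P : MvPolynomial (Fin 2) ℝ) (x t : ℝ) :
    HasDerivAt (fun t => evalP P x t) (evalP (pderiv 1 P) x t) t := by
  have h : ∀ s, Function.update ![x, t] 1 s = ![x, s] := fun s => by
    ext i; fin_cases i <;> simp
  simpa only [evalP, h] using P.hasDerivAt_eval_update ![x, t] 1 t

@[fun_prop]
theorem Continuous.evalP {α : Type*} [TopologicalSpace α] (P : MvPolynomial (Fin 2) ℝ)
    {f g : α → ℝ} (hf : Continuous f) (hg : Continuous g) :
    Continuous fun a => evalP P (f a) (g a) :=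
  (continuous_eval P).comp (continuous_pi (Fin.forall_fin_two.2 ⟨hf, hg⟩))

theorem integral_deriv_mul_self {f f' : ℝ → ℝ} {a b : ℝ}
    (hf : ∀ x ∈ uIcc a b, HasDerivAt f (f' x) x)
    (hint : IntervalIntegrable (fun x => f' x * f x) volume a b) :
    ∫ x in a..b, f' x * f x = (f b ^ 2 - f a ^ 2) / 2 := by
  have hsq : ∀ x ∈ uIcc a b, HasDerivAt (fun x => f x ^ 2 / 2) (f' x * f x) x := fun x hx =>
    (((hf x hx).pow 2).div_const 2).congr_deriv (by ring)
  rw [intervalIntegral.integral_eq_sub_of_hasDerivAt hsq hint]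
  ring

theorem integral_mul_le_half_add_integral_sq {f g : ℝ → ℝ} {a b : ℝ} (hab : a ≤ b)
    (hf : Continuous f) (hg : Continuous g) :
    ∫ x in a..b, f x * g x ≤ ((∫ x in a..b, f x ^ 2) + ∫ x in a..b, g x ^ 2) / 2 := by
  calc ∫ x in a..b, f x * g x ≤ ∫ x in a..b, (f x ^ 2 + g x ^ 2) / 2 :=
        intervalIntegral.integral_mono_on hab ((hf.mul hg).intervalIntegrable a b)
          ((by fun_prop : Continuous fun x => (f x ^ 2 + g x ^ 2) / 2).intervalIntegrable a b)
          fun x _ => by linarith [two_mul_le_add_sq (f x) (g x)]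
    _ = _ := by
      rw [intervalIntegral.integral_div, intervalIntegral.integral_add
        (f := fun x => f x ^ 2) (g := fun x => g x ^ 2)
        ((hf.pow 2).intervalIntegrable a b) ((hg.pow 2).intervalIntegrable a b)]

theorem sum_range_comp_add_pred_mod {β : Type*} [AddCommMonoid β] (M : ℕ) (g : ℕ → β) :
    ∑ j ∈ Finset.range M, g ((j + M - 1) % M) = ∑ j ∈ Finset.range M, g j := by
  cases M with
  | zero => simp
  | succ m =>
    rw [Finset.sum_range_succ', Finset.sum_range_succ]
    have hj : ∀ j < m, (j + 1 + (m + 1) - 1) % (m + 1) = j := fun j hj => by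
      rw [show j + 1 + (m + 1) - 1 = j + (m + 1) by omega, Nat.add_mod_right,
        Nat.mod_eq_of_lt (by omega)]
    rw [Finset.sum_congr rfl fun j hjm => by rw [hj j (Finset.mem_range.1 hjm)]]
    simp [Nat.mod_eq_of_lt (Nat.lt_succ_self m)]

theorem integral_integral_advection_mul_self (P : MvPolynomial (Fin 2) ℝ) (a b c d : ℝ) :
    ∫ x in a..b, ∫ t in c..d,
        (evalP (pderiv 1 P) x t + evalP (pderiv 0 P) x t) * evalP P x t
      = ((∫ x in a..b, evalP P x d ^ 2) - ∫ x in a..b, evalP P x c ^ 2) / 2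
        + ((∫ t in c..d, evalP P b t ^ 2) - ∫ t in c..d, evalP P a t ^ 2) / 2 := by
  have htime : ∀ x, ∫ t in c..d, evalP (pderiv 1 P) x t * evalP P x t
      = (evalP P x d ^ 2 - evalP P x c ^ 2) / 2 := fun x =>
    integral_deriv_mul_self (fun t _ => hasDerivAt_evalP_time P x t)
      ((by fun_prop : Continuous _).intervalIntegrable c d)
  have hspace : ∀ t, ∫ x in a..b, evalP (pderiv 0 P) x t * evalP P x t
      = (evalP P b t ^ 2 - evalP P a t ^ 2) / 2 := fun t =>
    integral_deriv_mul_self (fun x _ => hasDerivAt_evalP_space P x t)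
      ((by fun_prop : Continuous _).intervalIntegrable a b)
  calc _ = ∫ x in a..b, ((∫ t in c..d, evalP (pderiv 1 P) x t * evalP P x t)
          + ∫ t in c..d, evalP (pderiv 0 P) x t * evalP P x t) := by
        refine intervalIntegral.integral_congr fun x _ => ?_
        simp only [add_mul]
        exact intervalIntegral.integral_add ((by fun_prop : Continuous _).intervalIntegrable c d)
          ((by fun_prop : Continuous _).intervalIntegrable c d)
    _ = (∫ x in a..b, ∫ t in c..d, evalP (pderiv 1 P) x t * evalP P x t)
          + ∫ t in c..d, ∫ x in a..b, evalP (pderiv 0 P) x t * evalP P x t := by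
        rw [intervalIntegral.integral_add ((by fun_prop : Continuous _).intervalIntegrable a b)
          ((by fun_prop : Continuous _).intervalIntegrable a b)]
        congr 1
        refine intervalIntegral_intervalIntegral_swap ?_
        exact ((by fun_prop : Continuous (Function.uncurry fun x t =>
          evalP (pderiv 0 P) x t * evalP P x t)).continuousOn.integrableOn_compact
            (isCompact_uIcc.prod isCompact_uIcc)).mono_set
          (prod_mono uIoc_subset_uIcc uIoc_subset_uIcc)
    _ = _ := by
      simp only [htime, hspace, intervalIntegral.integral_div]
      rw [intervalIntegral.integral_sub, intervalIntegral.integral_sub] <;>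
        exact (by fun_prop : Continuous _).intervalIntegrable _ _

/-- The left-hand side of the scheme on one control volume, in its reference coordinates,
tested with `θ`; `qLeft` is the left neighbour, whose trace on its own right interface is the
upwind state on the left interface. -/
noncomputable def upwindWeakForm (Δx Δt : ℝ) (θ q qLeft : MvPolynomial (Fin 2) ℝ) : ℝ :=
  (∫ x in (0:ℝ)..Δx, evalP θ x Δt * evalP q x Δt)
    - (∫ x in (0:ℝ)..Δx, ∫ t in (0:ℝ)..Δt,
        (evalP (pderiv 1 θ) x t + evalP (pderiv 0 θ) x t) * evalP q x t)
    + (∫ t in (0:ℝ)..Δt, evalP θ Δx t * evalP q Δx t)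
    - (∫ t in (0:ℝ)..Δt, evalP θ 0 t * evalP qLeft Δx t)

theorem cell_energy_le_of_upwindWeakForm_self_eq {Δx Δt : ℝ} (hΔx : 0 ≤ Δx) (hΔt : 0 ≤ Δt)
    {P PLeft : MvPolynomial (Fin 2) ℝ} {v : ℝ → ℝ} (hv : Continuous v)
    (h : upwindWeakForm Δx Δt P P PLeft = ∫ x in (0:ℝ)..Δx, evalP P x 0 * v x) :
    (∫ x in (0:ℝ)..Δx, evalP P x Δt ^ 2) + (∫ t in (0:ℝ)..Δt, evalP P Δx t ^ 2)
      ≤ (∫ x in (0:ℝ)..Δx, v x ^ 2) + ∫ t in (0:ℝ)..Δt, evalP PLeft Δx t ^ 2 := by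
  rw [upwindWeakForm, integral_integral_advection_mul_self] at h
  simp only [← sq] at h
  have hinflow := integral_mul_le_half_add_integral_sq hΔt
    (f := fun t => evalP P 0 t) (g := fun t => evalP PLeft Δx t) (by fun_prop) (by fun_prop)
  have hinitial := integral_mul_le_half_add_integral_sq hΔx
    (f := fun x => evalP P x 0) (by fun_prop) hv
  linarith

theorem implicit_ADERDG_unconditional_L2_stability_general
    (N M : ℕ) (Δx Δt : ℝ) (hΔx : 0 < Δx) (hΔt : 0 < Δt)
    (q : ℕ → MvPolynomial (Fin 2) ℝ) (u : ℕ → Polynomial ℝ)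
    (hqdeg : ∀ j, (q j).totalDegree ≤ N)
    (hscheme : ∀ j < M, ∀ θ : MvPolynomial (Fin 2) ℝ, θ.totalDegree ≤ N →
      (∫ x in (0:ℝ)..Δx, evalP θ x Δt * evalP (q j) x Δt)
        - (∫ x in (0:ℝ)..Δx, ∫ t in (0:ℝ)..Δt,
            (evalP (MvPolynomial.pderiv 1 θ) x t
              + evalP (MvPolynomial.pderiv 0 θ) x t) * evalP (q j) x t)
        + (∫ t in (0:ℝ)..Δt, evalP θ Δx t * evalP (q j) Δx t)
        - (∫ t in (0:ℝ)..Δt, evalP θ 0 t * evalP (q ((j + M - 1) % M)) Δx t)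
      = ∫ x in (0:ℝ)..Δx, evalP θ x 0 * (u j).eval x) :
    ∑ j ∈ Finset.range M, ∫ x in (0:ℝ)..Δx, (evalP (q j) x Δt) ^ 2
      ≤ ∑ j ∈ Finset.range M, ∫ x in (0:ℝ)..Δx, ((u j).eval x) ^ 2 := by
  have hcell := Finset.sum_le_sum fun j (hj : j ∈ Finset.range M) =>
    cell_energy_le_of_upwindWeakForm_self_eq hΔx.le hΔt.le (u j).continuous
      (hscheme j (Finset.mem_range.1 hj) (q j) (hqdeg j))
  rw [Finset.sum_add_distrib, Finset.sum_add_distrib,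
    sum_range_comp_add_pred_mod M fun k => ∫ t in (0:ℝ)..Δt, evalP (q k) Δx t ^ 2] at hcell
  linarith

/-- Unconditional L² stability of the implicit ADER-DG method for the linear
advection equation `∂ₜu + ∂ₓu = 0` on a classical fixed uniform `MΔx`-periodic
geometry.  If the bivariate polynomials `q j` of total degree `≤ N` on each
control volume `C_j = Ω_j × (0,Δt)` satisfy, for every test polynomial `θ` of
total degree `≤ N`,
`∫_{Ω_j} θ(x,Δt)q_j(x,Δt)dx − ∬_{C_j}(∂ₜθ+∂ₓθ)q_j dxdt
  + ∫₀^{Δt} θ|_{right} q_j|_{right} dt − ∫₀^{Δt} θ|_{left} q_{j−1}|_{right} dt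
  = ∫_{Ω_j} θ(x,0)u_j(x)dx`
(the upwind fluxes on the vertical interfaces, the left neighbour taken
periodically), then `Σ_j ∫ q_j(·,Δt)² ≤ Σ_j ∫ u_j²` for every `Δt > 0`. -/
theorem implicit_ADERDG_unconditional_L2_stability
    (N M : ℕ) (hM : 1 ≤ M) (Δx Δt : ℝ) (hΔx : 0 < Δx) (hΔt : 0 < Δt)
    (q : ℕ → MvPolynomial (Fin 2) ℝ) (u : ℕ → Polynomial ℝ)
    (hqdeg : ∀ j, (q j).totalDegree ≤ N)
    (hudeg : ∀ j, (u j).natDegree ≤ N)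
    (hscheme : ∀ j < M, ∀ θ : MvPolynomial (Fin 2) ℝ, θ.totalDegree ≤ N →
      (∫ x in (0:ℝ)..Δx, evalP θ x Δt * evalP (q j) x Δt)
        - (∫ x in (0:ℝ)..Δx, ∫ t in (0:ℝ)..Δt,
            (evalP (MvPolynomial.pderiv 1 θ) x t
              + evalP (MvPolynomial.pderiv 0 θ) x t) * evalP (q j) x t)
        + (∫ t in (0:ℝ)..Δt, evalP θ Δx t * evalP (q j) Δx t)
        - (∫ t in (0:ℝ)..Δt, evalP θ 0 t * evalP (q ((j + M - 1) % M)) Δx t)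
      = ∫ x in (0:ℝ)..Δx, evalP θ x 0 * (u j).eval x) :
    ∑ j ∈ Finset.range M, ∫ x in (0:ℝ)..Δx, (evalP (q j) x Δt) ^ 2
      ≤ ∑ j ∈ Finset.range M, ∫ x in (0:ℝ)..Δx, ((u j).eval x) ^ 2 :=
  implicit_ADERDG_unconditional_L2_stability_general N M Δx Δt hΔx hΔt q u hqdeg hscheme
end
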